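/- arXiv:math/0401175 — 4 statements merged into one kernel-verified Lean document; each statement's English description precedes it below -/
import Mathlib

section
/- For any 0/1-labeling of a rooted binary tree T with n nodes, the inequality (b00 − b01)/2 + b10 ≤ (n+1)/2 holds; equivalently, b00 − b01 + 2·b10 ≤ n + 1. -/
/-- A rooted tree on `Fin n` with root `0`, given by a parent function.
Every non-root node's parent has a smaller index, which makes the graph acyclic
and connected to the root. -/
structure PhyloTree (n : ℕ) where
  parent : Fin n → Fin n
  root_fixed : ∀ v : Fin n, v.val = 0 → parent v = v
  parent_lt : ∀ v : Fin n, v.val ≠ 0 → (parent v).val < v.val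

namespace PhyloTree

variable {n : ℕ}

/-- Transition count `b ℓ i j`: the number of edges from a parent labeled `i`
to a child labeled `j`, for the `0/1`-labeling `ℓ`. -/
def b (T : PhyloTree n) (ℓ : Fin n → Fin 2) (i j : Fin 2) : ℕ :=
  (Finset.univ.filter (fun v : Fin n =>
    v.val ≠ 0 ∧ ℓ (T.parent v) = i ∧ ℓ v = j)).card

/-- The set of children of a node. -/
def children (T : PhyloTree n) (v : Fin n) : Finset (Fin n) :=
  Finset.univ.filter (fun w => w.val ≠ 0 ∧ T.parent w = v)

/-- A leaf is a node with no children. -/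
def IsLeaf (T : PhyloTree n) (v : Fin n) : Prop := T.children v = ∅

instance (T : PhyloTree n) (v : Fin n) : Decidable (T.IsLeaf v) :=
  inferInstanceAs (Decidable (T.children v = ∅))

/-- A rooted tree is binary if every non-leaf node has exactly two children. -/
def IsBinary (T : PhyloTree n) : Prop :=
  ∀ v : Fin n, T.IsLeaf v ∨ (T.children v).card = 2

/-- The finset of leaves. -/
def leaves (T : PhyloTree n) : Finset (Fin n) :=
  Finset.univ.filter (fun v => T.IsLeaf v)

end PhyloTree

/-! Each node labeled 1 has at most two children, so `b₁₀ + b₁₁ ≤ 2·N₁`, where `N₁` is the number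
of nodes labeled 1. Every such node except possibly the root is the lower end of an edge, so
`N₁ ≤ b₀₁ + b₁₁ + 1`. Together `b₁₀ ≤ 2·b₀₁ + b₁₁ + 2`, and adding the edge count
`b₀₀ + b₀₁ + b₁₀ + b₁₁ = n - 1` gives the bound. -/

open Finset

theorem Finset.card_filter_eq_zero_add_card_filter_eq_one {α : Type*} (s : Finset α)
    (f : α → Fin 2) : #(s.filter (f · = 0)) + #(s.filter (f · = 1)) = #s := by
  rw [← Fin.sum_univ_two (fun j => #(s.filter (f · = j)))]
  exact (card_eq_sum_card_fiberwise fun _ _ => mem_univ _).symm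

theorem Fin.card_filter_le_card_filter_val_ne_zero_add_one {n : ℕ} (p : Fin n → Prop)
    [DecidablePred p] : #{v | p v} ≤ #{v : Fin n | v.val ≠ 0 ∧ p v} + 1 := by
  have hroot : #{v : Fin n | p v ∧ v.val = 0} ≤ 1 :=
    card_le_one.2 fun a ha b hb => Fin.ext (by simp_all)
  calc #{v | p v} = #{v : Fin n | p v ∧ v.val ≠ 0} + #{v : Fin n | p v ∧ ¬ v.val ≠ 0} := by
        rw [← filter_filter, ← filter_filter, card_filter_add_card_filter_not]
    _ ≤ #{v : Fin n | v.val ≠ 0 ∧ p v} + 1 := by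
        simp only [not_not, and_comm (a := p _)] at hroot ⊢
        omega

theorem Fin.card_filter_val_ne_zero_add_one {n : ℕ} (hn : 0 < n) :
    #{v : Fin n | v.val ≠ 0} + 1 = n := by
  have : ({v : Fin n | v.val ≠ 0} : Finset (Fin n)) = univ.erase ⟨0, hn⟩ := by
    ext v
    simp [Fin.ext_iff]
  rw [this, card_erase_add_one (mem_univ _), card_univ, Fintype.card_fin]

namespace PhyloTree

variable {n : ℕ} (T : PhyloTree n)

theorem card_filter_parent_eq_sum_card_children (P : Fin n → Prop) [DecidablePred P] :
    #{v | v.val ≠ 0 ∧ P (T.parent v)} = ∑ w ∈ univ.filter P, #(T.children w) := by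
  rw [card_eq_sum_card_fiberwise (f := T.parent) (t := univ.filter P)
    fun v hv => mem_filter.2 ⟨mem_univ _, (mem_filter.1 hv).2.2⟩]
  refine sum_congr rfl fun w hw => congrArg card ?_
  ext v
  simp only [children, filter_filter, mem_filter, mem_univ, true_and]
  constructor
  · exact fun ⟨⟨h0, _⟩, hv⟩ => ⟨h0, hv⟩
  · rintro ⟨h0, rfl⟩
    exact ⟨⟨h0, (mem_filter.1 hw).2⟩, rfl⟩

theorem card_filter_parent_le {k : ℕ} (hk : ∀ v, #(T.children v) ≤ k)
    (P : Fin n → Prop) [DecidablePred P] :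
    #{v | v.val ≠ 0 ∧ P (T.parent v)} ≤ k * #{v | P v} := by
  rw [card_filter_parent_eq_sum_card_children, mul_comm]
  exact sum_le_card_nsmul _ _ _ fun v _ => hk v

theorem IsBinary.card_children_le_two {T : PhyloTree n} (hT : T.IsBinary) (v : Fin n) :
    #(T.children v) ≤ 2 := by
  rcases hT v with hleaf | htwo
  · simp [show T.children v = ∅ from hleaf]
  · exact htwo.le

theorem b_add_b_left (ℓ : Fin n → Fin 2) (i : Fin 2) :
    T.b ℓ i 0 + T.b ℓ i 1 = #{v | v.val ≠ 0 ∧ ℓ (T.parent v) = i} := by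
  rw [← card_filter_eq_zero_add_card_filter_eq_one _ ℓ]
  simp only [b, filter_filter, and_assoc]

theorem b_add_b_right (ℓ : Fin n → Fin 2) (j : Fin 2) :
    T.b ℓ 0 j + T.b ℓ 1 j = #{v | v.val ≠ 0 ∧ ℓ v = j} := by
  rw [← card_filter_eq_zero_add_card_filter_eq_one _ (fun v => ℓ (T.parent v))]
  simp only [b, filter_filter, and_assoc, and_comm (a := ℓ _ = j)]

theorem sum_b_eq_card_filter_val_ne_zero (ℓ : Fin n → Fin 2) :
    T.b ℓ 0 0 + T.b ℓ 0 1 + (T.b ℓ 1 0 + T.b ℓ 1 1) = #{v : Fin n | v.val ≠ 0} := by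
  rw [b_add_b_left, b_add_b_left,
    ← card_filter_eq_zero_add_card_filter_eq_one (univ.filter (·.val ≠ 0))
      (fun v => ℓ (T.parent v))]
  simp only [filter_filter]

end PhyloTree

/-- For a binary tree with n nodes, b00 − b01 + 2·b10 ≤ n + 1. -/
theorem stmt2 {n : ℕ} (T : PhyloTree n) (hT : T.IsBinary) (ℓ : Fin n → Fin 2) :
    (T.b ℓ 0 0 : ℤ) - T.b ℓ 0 1 + 2 * T.b ℓ 1 0 ≤ n + 1 := by
  obtain rfl | hn := n.eq_zero_or_pos
  · simp [PhyloTree.b]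
  have hedges := T.sum_b_eq_card_filter_val_ne_zero ℓ
  have hnodes := Fin.card_filter_val_ne_zero_add_one hn
  have hout : T.b ℓ 1 0 + T.b ℓ 1 1 ≤ 2 * #{v | ℓ v = 1} :=
    (T.b_add_b_left ℓ 1).trans_le (T.card_filter_parent_le hT.card_children_le_two (ℓ · = 1))
  have hin : #{v | ℓ v = 1} ≤ T.b ℓ 0 1 + T.b ℓ 1 1 + 1 :=
    T.b_add_b_right ℓ 1 ▸ Fin.card_filter_le_card_filter_val_ne_zero_add_one _
  omega
end

section
/- Let T be a rooted binary tree with n nodes whose labeling has transition vector (b00,b01,b10,b11) = (0, (n−3)/3, 2n/3, 0). Then the root is labeled 1, every leaf is labeled 0, the labeling alternates along every root-to-leaf path (no 0→0 and no 1→1 transitions), and every leaf has odd depth. -/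
open Finset

lemma Fin.card_filter_val_ne_zero_add_ite {n : ℕ} (hn : 0 < n) (p : Fin n → Prop)
    [DecidablePred p] :
    #{v | v.val ≠ 0 ∧ p v} + (if p ⟨0, hn⟩ then 1 else 0) = #{v | p v} := by
  rw [← card_filter_add_card_filter_not (s := {v | p v}) (fun v => v.val ≠ 0), filter_filter,
    filter_filter]
  congr 1
  · exact congrArg card (filter_congr fun v _ => and_comm)
  · split_ifs with h
    · refine (card_eq_one.2 ⟨(⟨0, hn⟩ : Fin n), ?_⟩).symm
      ext v
      simp only [mem_filter, mem_univ, true_and, not_not, mem_singleton, Fin.ext_iff]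
      exact ⟨And.right, fun hv => ⟨(Fin.ext hv : v = ⟨0, hn⟩) ▸ h, hv⟩⟩
    · refine (card_eq_zero.2 (filter_eq_empty_iff.2 fun v _ ⟨hv, hv0⟩ =>
        h ((Fin.ext (not_not.1 hv0) : v = ⟨0, hn⟩) ▸ hv))).symm

namespace PhyloTree

variable {n : ℕ} (T : PhyloTree n)

lemma sum_b_eq_card_parent_label_eq (ℓ : Fin n → Fin 2) (i : Fin 2) :
    ∑ j, T.b ℓ i j = #{v | v.val ≠ 0 ∧ ℓ (T.parent v) = i} := by
  rw [card_eq_sum_card_fiberwise (f := ℓ) (t := univ) (fun _ _ => mem_coe.2 (mem_univ _))]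
  simp only [b, filter_filter, and_assoc]

lemma sum_b_eq_card_label_eq (ℓ : Fin n → Fin 2) (j : Fin 2) :
    ∑ i, T.b ℓ i j = #{v | v.val ≠ 0 ∧ ℓ v = j} := by
  rw [card_eq_sum_card_fiberwise (f := ℓ ∘ T.parent) (t := univ)
    (fun _ _ => mem_coe.2 (mem_univ _))]
  simp only [b, filter_filter, Function.comp_apply]
  refine sum_congr rfl fun i _ => congrArg card (filter_congr fun v _ => ?_)
  tauto

lemma card_children_of_isBinary (hT : T.IsBinary) (w : Fin n) :
    #(T.children w) = if T.IsLeaf w then 0 else 2 := by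
  split_ifs with hw
  · exact card_eq_zero.2 hw
  · exact (hT w).resolve_left hw

lemma card_filter_parent (p : Fin n → Prop) [DecidablePred p] :
    #{v | v.val ≠ 0 ∧ p (T.parent v)} = ∑ w with p w, #(T.children w) := by
  rw [card_eq_sum_card_fiberwise (f := T.parent) (t := {w | p w}) (fun v hv => by simp_all)]
  refine sum_congr rfl fun w hw => congrArg card ?_
  ext v
  simp only [children, mem_filter, mem_univ, true_and] at hw ⊢
  constructor
  · rintro ⟨⟨hv, -⟩, rfl⟩; exact ⟨hv, rfl⟩
  · rintro ⟨hv, rfl⟩; exact ⟨⟨hv, hw⟩, rfl⟩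

lemma card_filter_parent_of_isBinary (hT : T.IsBinary) (p : Fin n → Prop) [DecidablePred p] :
    #{v | v.val ≠ 0 ∧ p (T.parent v)} = 2 * #{w | p w ∧ ¬ T.IsLeaf w} := by
  rw [card_filter_parent, sum_congr rfl fun w _ => T.card_children_of_isBinary hT w, sum_ite,
    sum_const_zero, sum_const, filter_filter, smul_eq_mul, zero_add, mul_comm]

lemma b_eq_zero_iff (ℓ : Fin n → Fin 2) (i j : Fin 2) :
    T.b ℓ i j = 0 ↔ ∀ v : Fin n, v.val ≠ 0 → ℓ (T.parent v) = i → ℓ v ≠ j := by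
  simp only [b, card_eq_zero, filter_eq_empty_iff, mem_univ, true_implies, not_and]

lemma label_ne_label_parent {ℓ : Fin n → Fin 2} (h00 : T.b ℓ 0 0 = 0) (h11 : T.b ℓ 1 1 = 0)
    {v : Fin n} (hv : v.val ≠ 0) : ℓ v ≠ ℓ (T.parent v) := by
  have hdiag : ∀ i, T.b ℓ i i = 0 := Fin.forall_fin_two.2 ⟨h00, h11⟩
  exact fun h => (T.b_eq_zero_iff ℓ _ _).1 (hdiag (ℓ v)) v hv h.symm rfl

lemma even_depth_iff_label_eq_label_root (hn : 0 < n) {d : Fin n → ℕ} (hd0 : d ⟨0, hn⟩ = 0)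
    (hd : ∀ v : Fin n, v.val ≠ 0 → d v = d (T.parent v) + 1) {ℓ : Fin n → Fin 2}
    (halt : ∀ v : Fin n, v.val ≠ 0 → ℓ v ≠ ℓ (T.parent v)) (v : Fin n) :
    Even (d v) ↔ ℓ v = ℓ ⟨0, hn⟩ := by
  induction v using WellFoundedLT.induction with
  | ind v ih =>
    by_cases hv : v.val = 0
    · obtain rfl : v = ⟨0, hn⟩ := Fin.ext hv
      simp [hd0]
    · rw [hd v hv, Nat.even_add_one, ih _ (T.parent_lt v hv)]
      have := halt v hv
      omega

end PhyloTree

/-- if a labeling of a binary tree has transition vector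
(0, (n−3)/3, 2n/3, 0), then the root is labeled 1, every leaf is labeled 0,
the labeling alternates along every edge, and every leaf has odd depth. -/
theorem stmt5 {n : ℕ} (hn : 0 < n) (T : PhyloTree n) (hT : T.IsBinary)
    (d : Fin n → ℕ) (hd0 : d ⟨0, hn⟩ = 0)
    (hd : ∀ v : Fin n, v.val ≠ 0 → d v = d (T.parent v) + 1)
    (ℓ : Fin n → Fin 2)
    (h00 : T.b ℓ 0 0 = 0) (h11 : T.b ℓ 1 1 = 0)
    (h01 : 3 * T.b ℓ 0 1 + 3 = n) (h10 : 3 * T.b ℓ 1 0 = 2 * n) :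
    ℓ ⟨0, hn⟩ = 1
      ∧ (∀ v : Fin n, T.IsLeaf v → ℓ v = 0)
      ∧ (∀ v : Fin n, v.val ≠ 0 → ℓ v ≠ ℓ (T.parent v))
      ∧ (∀ v : Fin n, T.IsLeaf v → Odd (d v)) := by
  have halt : ∀ v : Fin n, v.val ≠ 0 → ℓ v ≠ ℓ (T.parent v) :=
    fun v => T.label_ne_label_parent h00 h11
  have hrow : T.b ℓ 1 0 = 2 * #{w | ℓ w = 1 ∧ ¬ T.IsLeaf w} := by
    rw [← T.card_filter_parent_of_isBinary hT, ← T.sum_b_eq_card_parent_label_eq,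
      Fin.sum_univ_two, h11, add_zero]
  have hcol : T.b ℓ 0 1 = #{v | v.val ≠ 0 ∧ ℓ v = 1} := by
    rw [← T.sum_b_eq_card_label_eq, Fin.sum_univ_two, h11, add_zero]
  have hroot := Fin.card_filter_val_ne_zero_add_ite hn (ℓ · = 1)
  have hleaf := card_filter_add_card_filter_not (s := {v | ℓ v = 1}) (fun v => ¬ T.IsLeaf v)
  simp only [filter_filter, not_not] at hleaf
  obtain ⟨hroot1, hleaf1⟩ : ℓ ⟨0, hn⟩ = 1 ∧ #{v | ℓ v = 1 ∧ T.IsLeaf v} = 0 := by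
    split_ifs at hroot <;> omega
  have hleaf0 : ∀ v : Fin n, T.IsLeaf v → ℓ v = 0 := fun v hv => by
    have := filter_eq_empty_iff.1 (card_eq_zero.1 hleaf1) (mem_univ v)
    have : ℓ v ≠ 1 := fun h => this ⟨h, hv⟩
    omega
  refine ⟨hroot1, hleaf0, halt, fun v hv => Nat.not_even_iff_odd.1 fun he => ?_⟩
  have := (T.even_depth_iff_label_eq_label_root hn hd0 hd halt v).1 he
  simp [hleaf0 v hv, hroot1] at this
end

section
/- If a rooted binary tree T is completely odd (every leaf is at odd depth from the root) and has n nodes, then n is divisible by 3. -/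
/-!
Nodes at even depth are not leaves, so in a binary tree each of them has exactly two children,
and the nodes at odd depth are precisely these children. Hence there are twice as many nodes at
odd depth as at even depth, and `n = 3 · #{even-depth nodes}`.
-/

namespace PhyloTree

open Finset

variable {n : ℕ} (T : PhyloTree n)

theorem mem_children {v w : Fin n} : w ∈ T.children v ↔ w.val ≠ 0 ∧ T.parent w = v := by
  simp [children]

theorem pairwiseDisjoint_children (s : Set (Fin n)) : s.PairwiseDisjoint T.children := by
  intro u _ u' _ huu'
  refine Finset.disjoint_left.2 fun w hw hw' => huu' ?_
  rw [← (T.mem_children.1 hw).2, (T.mem_children.1 hw').2]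

theorem biUnion_children_filter (p : Fin n → Prop) [DecidablePred p] :
    (univ.filter p).biUnion T.children = univ.filter (fun w => w.val ≠ 0 ∧ p (T.parent w)) := by
  ext w
  simp only [mem_biUnion, mem_filter, mem_univ, true_and, mem_children]
  constructor
  · rintro ⟨v, hv, hw0, rfl⟩
    exact ⟨hw0, hv⟩
  · rintro ⟨hw0, hp⟩
    exact ⟨T.parent w, hp, hw0, rfl⟩

theorem card_biUnion_children {T : PhyloTree n} (hT : T.IsBinary) {s : Finset (Fin n)}
    (hs : ∀ v ∈ s, ¬ T.IsLeaf v) : (s.biUnion T.children).card = 2 * s.card := by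
  rw [card_biUnion (T.pairwiseDisjoint_children s),
    sum_congr rfl fun v hv => (hT v).resolve_left (hs v hv), sum_const, smul_eq_mul, mul_comm]

theorem odd_depth_iff {hn : 0 < n} {d : Fin n → ℕ} (hd0 : d ⟨0, hn⟩ = 0)
    (hd : ∀ v : Fin n, v.val ≠ 0 → d v = d (T.parent v) + 1) (w : Fin n) :
    Odd (d w) ↔ w.val ≠ 0 ∧ Even (d (T.parent w)) := by
  by_cases hw0 : w.val = 0
  · obtain rfl : w = ⟨0, hn⟩ := Fin.ext hw0
    simp [hd0]
  · simp [hw0, hd w hw0, Nat.odd_add_one]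

end PhyloTree

/-- a completely odd binary tree (every leaf at odd depth) with n nodes
has n divisible by 3. -/
theorem stmt6 {n : ℕ} (hn : 0 < n) (T : PhyloTree n) (hT : T.IsBinary)
    (d : Fin n → ℕ) (hd0 : d ⟨0, hn⟩ = 0)
    (hd : ∀ v : Fin n, v.val ≠ 0 → d v = d (T.parent v) + 1)
    (hodd : ∀ v : Fin n, T.IsLeaf v → Odd (d v)) :
    3 ∣ n := by
  set E := Finset.univ.filter fun v : Fin n => Even (d v)
  have hE : ∀ v ∈ E, ¬ T.IsLeaf v := fun v hv hleaf =>
    Nat.not_even_iff_odd.2 (hodd v hleaf) (Finset.mem_filter.1 hv).2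
  have hO : E.biUnion T.children = Finset.univ.filter fun v => ¬ Even (d v) := by
    rw [T.biUnion_children_filter]
    simp only [Nat.not_even_iff_odd, T.odd_depth_iff hd0 hd]
  have hsplit : E.card + (E.biUnion T.children).card = n := by
    rw [hO, Finset.card_filter_add_card_filter_not, Finset.card_univ, Fintype.card_fin]
  rw [PhyloTree.card_biUnion_children hT hE] at hsplit
  exact ⟨E.card, by omega⟩
end

section
/- Let T be a completely odd rooted binary tree with n nodes. The alternating labeling (nodes at even depth labeled 1, nodes at odd depth labeled 0) has transition counts b00 = 0, b11 = 0, b01 + b10 = n − 1, and moreover b10 = 2n/3 and b01 = (n−3)/3. -/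
namespace PhyloTree

open Finset

variable {n : ℕ} (T : PhyloTree n)

theorem card_filter_parent_mem (S : Finset (Fin n)) :
    #{w | w.val ≠ 0 ∧ T.parent w ∈ S} = ∑ v ∈ S, #(T.children v) := by
  have hbiUnion :
      ({w | w.val ≠ 0 ∧ T.parent w ∈ S} : Finset (Fin n)) = S.biUnion T.children := by
    ext w
    simp only [mem_filter, mem_univ, true_and, mem_biUnion, mem_children]
    exact ⟨fun ⟨hw, hS⟩ => ⟨_, hS, hw, rfl⟩, fun ⟨v, hv, hw, hpw⟩ => ⟨hw, hpw ▸ hv⟩⟩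
  rw [hbiUnion, card_biUnion]
  intro x _ y _ hxy
  refine disjoint_left.mpr fun w hwx hwy => hxy ?_
  rw [mem_children] at hwx hwy
  exact hwx.2.symm.trans hwy.2

theorem card_filter_nonroot_add_one (hn : 0 < n) (p : Fin n → Prop) [DecidablePred p]
    (hroot : p ⟨0, hn⟩) : #{w | w.val ≠ 0 ∧ p w} + 1 = #{w | p w} := by
  have herase :
      ({w | w.val ≠ 0 ∧ p w} : Finset (Fin n)) = ({w | p w} : Finset _).erase ⟨0, hn⟩ := by
    ext w
    simp [Fin.ext_iff, and_comm]
  rw [herase, card_erase_add_one (by simpa using hroot)]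

theorem IsBinary.card_children {T : PhyloTree n} (hT : T.IsBinary) {v : Fin n}
    (hv : ¬T.IsLeaf v) :
    #(T.children v) = 2 :=
  (hT v).resolve_left hv

def IsAlternating (ℓ : Fin n → Fin 2) : Prop :=
  ∀ v : Fin n, v.val ≠ 0 → ℓ (T.parent v) ≠ ℓ v

namespace IsAlternating

variable {T} {ℓ : Fin n → Fin 2} (hℓ : T.IsAlternating ℓ)
include hℓ

theorem b_self (i : Fin 2) : T.b ℓ i i = 0 := by
  rw [b, card_eq_zero, filter_eq_empty_iff]
  rintro v - ⟨hv, hp, hc⟩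
  exact hℓ v hv (hp.trans hc.symm)

theorem parent_label_iff {i j : Fin 2} (hij : i ≠ j) {v : Fin n} (hv : v.val ≠ 0) :
    ℓ (T.parent v) = i ↔ ℓ v = j := by
  have := hℓ v hv
  omega

theorem b_eq_card_label {i j : Fin 2} (hij : i ≠ j) :
    T.b ℓ i j = #{w | w.val ≠ 0 ∧ ℓ w = j} := by
  refine congrArg card (filter_congr fun v _ => ?_)
  exact and_congr_right fun hv => by rw [hℓ.parent_label_iff hij hv, and_self]

theorem b_eq_sum_card_children {i j : Fin 2} (hij : i ≠ j) :
    T.b ℓ i j = ∑ v ∈ {v | ℓ v = i}, #(T.children v) := by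
  rw [← card_filter_parent_mem]
  refine congrArg card (filter_congr fun v _ => ?_)
  exact and_congr_right fun hv => by simp [hℓ.parent_label_iff hij hv]

theorem b_zero_one_add_b_one_zero : T.b ℓ 0 1 + T.b ℓ 1 0 = n - 1 := by
  rw [hℓ.b_eq_card_label zero_ne_one, hℓ.b_eq_card_label one_ne_zero, ← filter_filter,
    ← filter_filter]
  have hlabel (w : Fin n) : ℓ w = 0 ↔ ¬ℓ w = 1 := by omega
  simp only [hlabel]
  rw [card_filter_add_card_filter_not]
  rcases n with _ | m
  · simp
  · simpa using card_filter_nonroot_add_one m.succ_pos (fun _ => True) trivial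

end IsAlternating

theorem isAlternating_parity {d : Fin n → ℕ}
    (hd : ∀ v : Fin n, v.val ≠ 0 → d v = d (T.parent v) + 1) :
    T.IsAlternating fun v => if Even (d v) then 1 else 0 := by
  intro v hv
  simp only [hd v hv]
  by_cases h : Even (d (T.parent v)) <;> simp [h, Nat.even_add_one]

end PhyloTree

/-- on a completely odd binary tree, the alternating labeling
(1 at even depth, 0 at odd depth) has b00 = 0, b11 = 0, b01 + b10 = n − 1,
b10 = 2n/3 and b01 = (n−3)/3. -/
theorem stmt7 {n : ℕ} (hn : 0 < n) (T : PhyloTree n) (hT : T.IsBinary)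
    (d : Fin n → ℕ) (hd0 : d ⟨0, hn⟩ = 0)
    (hd : ∀ v : Fin n, v.val ≠ 0 → d v = d (T.parent v) + 1)
    (hodd : ∀ v : Fin n, T.IsLeaf v → Odd (d v)) :
    T.b (fun v => if Even (d v) then 1 else 0) 0 0 = 0
      ∧ T.b (fun v => if Even (d v) then 1 else 0) 1 1 = 0
      ∧ T.b (fun v => if Even (d v) then 1 else 0) 0 1
          + T.b (fun v => if Even (d v) then 1 else 0) 1 0 = n - 1
      ∧ 3 * T.b (fun v => if Even (d v) then 1 else 0) 1 0 = 2 * n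
      ∧ 3 * T.b (fun v => if Even (d v) then 1 else 0) 0 1 + 3 = n := by
  set ℓ : Fin n → Fin 2 := fun v => if Even (d v) then 1 else 0
  have hℓ : T.IsAlternating ℓ := T.isAlternating_parity hd
  have hlabel (v : Fin n) : ℓ v = 1 ↔ Even (d v) := by by_cases h : Even (d v) <;> simp [ℓ, h]
  set evens : Finset (Fin n) := Finset.univ.filter fun v => ℓ v = 1
  have hb10 : T.b ℓ 1 0 = 2 * evens.card := by
    rw [hℓ.b_eq_sum_card_children one_ne_zero, mul_comm, ← smul_eq_mul, ← Finset.sum_const]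
    refine Finset.sum_congr rfl fun v hv => hT.card_children fun hleaf => ?_
    exact Nat.not_even_iff_odd.mpr (hodd v hleaf) ((hlabel v).mp (Finset.mem_filter.mp hv).2)
  have hb01 : T.b ℓ 0 1 + 1 = evens.card := by
    rw [hℓ.b_eq_card_label zero_ne_one]
    exact PhyloTree.card_filter_nonroot_add_one hn _ ((hlabel _).mpr (by rw [hd0]; exact Even.zero))
  have hedges := hℓ.b_zero_one_add_b_one_zero
  exact ⟨hℓ.b_self 0, hℓ.b_self 1, hedges, by omega, by omega⟩
end
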